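/- Let $C = \{(\psi, \varphi_1, \varphi_2, \varphi_3) \in \mathbb{R}^4 : \psi > 0,\ 2\varphi_1 - \varphi_2 > 0,\ -\varphi_1 + 2\varphi_2 - \varphi_3 > 0,\ -\varphi_2 + 2\varphi_3 > 0\}$ be the open dual Weyl cone of $A_1 \oplus A_3$, and consider the seven linear forms $\varpi_3 = -\varphi_1 + \varphi_3$, $\varpi_4 = \psi - \varphi_1 + \varphi_2$, $\varpi_5 = \psi - \varphi_2 + \varphi_3$, $\varpi_6 = -\psi + \varphi_1$, $\varpi_7 = -\psi - \varphi_1 + \varphi_2$, $\varpi_8 = -\psi - \varphi_2 + \varphi_3$, $\varpi_9 = -\psi + \varphi_3$. Then the set of sign vectors $(\operatorname{sign}\varpi_3, \dots, \operatorname{sign}\varpi_9) \in \{-1, +1\}^7$ realized at points of $C$ where all seven forms are nonzero consists of exactly the following twelve vectors (written with $+$ for $+1$ and $-$ for $-1$, in the order $(\varpi_3, \varpi_4, \varpi_5, \varpi_6, \varpi_7, \varpi_8, \varpi_9)$): $(-,-,-,+,-,-,+)$, $(-,+,-,+,-,-,+)$, $(-,+,+,+,-,-,+)$, $(-,+,+,+,-,-,-)$,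 $(-,+,+,-,-,-,-)$, $(-,+,-,+,+,-,+)$, $(+,+,-,+,+,-,+)$, $(+,+,+,-,-,-,-)$, $(+,+,+,-,-,-,+)$, $(+,+,+,+,-,-,+)$, $(+,+,+,+,+,-,+)$, $(+,+,+,+,+,+,+)$; in particular the hyperplane arrangement $\mathrm{I}(A_1 \oplus A_3, (\mathbf{3},\mathbf{1}) \oplus (\mathbf{1},\mathbf{15}) \oplus (\mathbf{2},\mathbf{4}) \oplus (\mathbf{2},\bar{\mathbf{4}}) \oplus (\mathbf{1},\mathbf{6}))$ has exactly twelve chambers. -/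
import Mathlib

/-- The seven sign-indefinite weights `ϖ₃, …, ϖ₉` of the representation
`(𝟑,𝟏) ⊕ (𝟏,𝟏𝟓) ⊕ (𝟐,𝟒) ⊕ (𝟐,𝟒̄) ⊕ (𝟏,𝟔)` of `A₁ ⊕ A₃`, evaluated at `(ψ, φ₁, φ₂, φ₃)`. -/
def formsA1A3 (ψ φ₁ φ₂ φ₃ : ℝ) : Fin 7 → ℝ :=
  ![-φ₁ + φ₃, ψ - φ₁ + φ₂, ψ - φ₂ + φ₃, -ψ + φ₁, -ψ - φ₁ + φ₂, -ψ - φ₂ + φ₃, -ψ + φ₃]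

/-- The set of sign vectors (`true` for positive, `false` for negative) realized by
`(ϖ₃, …, ϖ₉)` at points of the open dual Weyl cone of `A₁ ⊕ A₃` where all seven forms are
nonzero. -/
def realizedSignVectorsA1A3 : Set (Fin 7 → Bool) :=
  {v | ∃ ψ φ₁ φ₂ φ₃ : ℝ,
    (0 < ψ ∧ 0 < 2 * φ₁ - φ₂ ∧ 0 < -φ₁ + 2 * φ₂ - φ₃ ∧ 0 < -φ₂ + 2 * φ₃) ∧
    (∀ i, formsA1A3 ψ φ₁ φ₂ φ₃ i ≠ 0) ∧
    (∀ i, v i = true ↔ 0 < formsA1A3 ψ φ₁ φ₂ φ₃ i)}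

private lemma vec_eq7 (v : Fin 7 → Bool) : v = ![v 0, v 1, v 2, v 3, v 4, v 5, v 6] := by
  funext i; fin_cases i <;> rfl

set_option maxHeartbeats 4000000 in
private lemma key_eq :
    realizedSignVectorsA1A3 =
      {![false, false, false, true, false, false, true],
       ![false, true, false, true, false, false, true],
       ![false, true, true, true, false, false, true],
       ![false, true, true, true, false, false, false],
       ![false, true, true, false, false, false, false],
       ![false, true, false, true, true, false, true],
       ![true, true, false, true, true, false, true],
       ![true, true, true, false, false, false, false],
       ![true, true, true, false, false, false, true],
       ![true, true, true, true, false, false, true],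
       ![true, true, true, true, true, false, true],
       ![true, true, true, true, true, true, true]} := by
  ext v
  simp only [realizedSignVectorsA1A3, Set.mem_setOf_eq, Set.mem_insert_iff,
    Set.mem_singleton_iff]
  constructor
  · rintro ⟨ψ, φ₁, φ₂, φ₃, ⟨h1, h2, h3, h4⟩, hne, hv⟩
    have hs0 : (v 0 = false ∧ -φ₁ + φ₃ < 0) ∨ (v 0 = true ∧ 0 < -φ₁ + φ₃) := by
      have hf : formsA1A3 ψ φ₁ φ₂ φ₃ 0 = -φ₁ + φ₃ := rfl
      rcases (hne 0).lt_or_gt with si | si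
      · exact Or.inl ⟨Bool.eq_false_iff.2 fun h => absurd ((hv 0).1 h) (not_lt.2 si.le),
          hf ▸ si⟩
      · exact Or.inr ⟨(hv 0).2 si, hf ▸ si⟩
    have hs1 : (v 1 = false ∧ ψ - φ₁ + φ₂ < 0) ∨ (v 1 = true ∧ 0 < ψ - φ₁ + φ₂) := by
      have hf : formsA1A3 ψ φ₁ φ₂ φ₃ 1 = ψ - φ₁ + φ₂ := rfl
      rcases (hne 1).lt_or_gt with si | si
      · exact Or.inl ⟨Bool.eq_false_iff.2 fun h => absurd ((hv 1).1 h) (not_lt.2 si.le),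
          hf ▸ si⟩
      · exact Or.inr ⟨(hv 1).2 si, hf ▸ si⟩
    have hs2 : (v 2 = false ∧ ψ - φ₂ + φ₃ < 0) ∨ (v 2 = true ∧ 0 < ψ - φ₂ + φ₃) := by
      have hf : formsA1A3 ψ φ₁ φ₂ φ₃ 2 = ψ - φ₂ + φ₃ := rfl
      rcases (hne 2).lt_or_gt with si | si
      · exact Or.inl ⟨Bool.eq_false_iff.2 fun h => absurd ((hv 2).1 h) (not_lt.2 si.le),
          hf ▸ si⟩
      · exact Or.inr ⟨(hv 2).2 si, hf ▸ si⟩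
    have hs3 : (v 3 = false ∧ -ψ + φ₁ < 0) ∨ (v 3 = true ∧ 0 < -ψ + φ₁) := by
      have hf : formsA1A3 ψ φ₁ φ₂ φ₃ 3 = -ψ + φ₁ := rfl
      rcases (hne 3).lt_or_gt with si | si
      · exact Or.inl ⟨Bool.eq_false_iff.2 fun h => absurd ((hv 3).1 h) (not_lt.2 si.le),
          hf ▸ si⟩
      · exact Or.inr ⟨(hv 3).2 si, hf ▸ si⟩
    have hs4 : (v 4 = false ∧ -ψ - φ₁ + φ₂ < 0) ∨ (v 4 = true ∧ 0 < -ψ - φ₁ + φ₂) := by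
      have hf : formsA1A3 ψ φ₁ φ₂ φ₃ 4 = -ψ - φ₁ + φ₂ := rfl
      rcases (hne 4).lt_or_gt with si | si
      · exact Or.inl ⟨Bool.eq_false_iff.2 fun h => absurd ((hv 4).1 h) (not_lt.2 si.le),
          hf ▸ si⟩
      · exact Or.inr ⟨(hv 4).2 si, hf ▸ si⟩
    have hs5 : (v 5 = false ∧ -ψ - φ₂ + φ₃ < 0) ∨ (v 5 = true ∧ 0 < -ψ - φ₂ + φ₃) := by
      have hf : formsA1A3 ψ φ₁ φ₂ φ₃ 5 = -ψ - φ₂ + φ₃ := rfl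
      rcases (hne 5).lt_or_gt with si | si
      · exact Or.inl ⟨Bool.eq_false_iff.2 fun h => absurd ((hv 5).1 h) (not_lt.2 si.le),
          hf ▸ si⟩
      · exact Or.inr ⟨(hv 5).2 si, hf ▸ si⟩
    have hs6 : (v 6 = false ∧ -ψ + φ₃ < 0) ∨ (v 6 = true ∧ 0 < -ψ + φ₃) := by
      have hf : formsA1A3 ψ φ₁ φ₂ φ₃ 6 = -ψ + φ₃ := rfl
      rcases (hne 6).lt_or_gt with si | si
      · exact Or.inl ⟨Bool.eq_false_iff.2 fun h => absurd ((hv 6).1 h) (not_lt.2 si.le),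
          hf ▸ si⟩
      · exact Or.inr ⟨(hv 6).2 si, hf ▸ si⟩
    rcases hs0 with ⟨b0, s0⟩ | ⟨b0, s0⟩ <;>
      rcases hs1 with ⟨b1, s1⟩ | ⟨b1, s1⟩ <;>
      rcases hs2 with ⟨b2, s2⟩ | ⟨b2, s2⟩ <;>
      rcases hs3 with ⟨b3, s3⟩ | ⟨b3, s3⟩ <;>
      rcases hs4 with ⟨b4, s4⟩ | ⟨b4, s4⟩ <;>
      rcases hs5 with ⟨b5, s5⟩ | ⟨b5, s5⟩ <;>
      rcases hs6 with ⟨b6, s6⟩ | ⟨b6, s6⟩ <;>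
      first
      | (rw [vec_eq7 v, b0, b1, b2, b3, b4, b5, b6]; decide)
      | (exfalso; linarith)
  · rintro (rfl | rfl | rfl | rfl | rfl | rfl | rfl | rfl | rfl | rfl | rfl | rfl)
    · exact ⟨(1/2), (9/2), (7/2), 2, ⟨by norm_num, by norm_num, by norm_num, by norm_num⟩,
        by intro i; fin_cases i <;> norm_num [formsA1A3],
        by intro i; fin_cases i <;> norm_num [formsA1A3]⟩
    · exact ⟨(1/2), (5/2), (5/2), (3/2), ⟨by norm_num, by norm_num, by norm_num, by norm_num⟩,
        by intro i; fin_cases i <;> norm_num [formsA1A3],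
        by intro i; fin_cases i <;> norm_num [formsA1A3]⟩
    · exact ⟨1, 2, 2, (3/2), ⟨by norm_num, by norm_num, by norm_num, by norm_num⟩,
        by intro i; fin_cases i <;> norm_num [formsA1A3],
        by intro i; fin_cases i <;> norm_num [formsA1A3]⟩
    · exact ⟨2, (5/2), (5/2), (3/2), ⟨by norm_num, by norm_num, by norm_num, by norm_num⟩,
        by intro i; fin_cases i <;> norm_num [formsA1A3],
        by intro i; fin_cases i <;> norm_num [formsA1A3]⟩
    · exact ⟨2, (3/2), (3/2), 1, ⟨by norm_num, by norm_num, by norm_num, by norm_num⟩,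
        by intro i; fin_cases i <;> norm_num [formsA1A3],
        by intro i; fin_cases i <;> norm_num [formsA1A3]⟩
    · exact ⟨(1/2), (5/2), (7/2), 2, ⟨by norm_num, by norm_num, by norm_num, by norm_num⟩,
        by intro i; fin_cases i <;> norm_num [formsA1A3],
        by intro i; fin_cases i <;> norm_num [formsA1A3]⟩
    · exact ⟨(1/2), 2, (7/2), (5/2), ⟨by norm_num, by norm_num, by norm_num, by norm_num⟩,
        by intro i; fin_cases i <;> norm_num [formsA1A3],
        by intro i; fin_cases i <;> norm_num [formsA1A3]⟩
    · exact ⟨2, 1, (3/2), (3/2), ⟨by norm_num, by norm_num, by norm_num, by norm_num⟩,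
        by intro i; fin_cases i <;> norm_num [formsA1A3],
        by intro i; fin_cases i <;> norm_num [formsA1A3]⟩
    · exact ⟨2, (3/2), (5/2), (5/2), ⟨by norm_num, by norm_num, by norm_num, by norm_num⟩,
        by intro i; fin_cases i <;> norm_num [formsA1A3],
        by intro i; fin_cases i <;> norm_num [formsA1A3]⟩
    · exact ⟨1, (3/2), 2, 2, ⟨by norm_num, by norm_num, by norm_num, by norm_num⟩,
        by intro i; fin_cases i <;> norm_num [formsA1A3],
        by intro i; fin_cases i <;> norm_num [formsA1A3]⟩
    · exact ⟨(1/2), (3/2), (5/2), (5/2), ⟨by norm_num, by norm_num, by norm_num, by norm_num⟩,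
        by intro i; fin_cases i <;> norm_num [formsA1A3],
        by intro i; fin_cases i <;> norm_num [formsA1A3]⟩
    · exact ⟨(1/2), 2, (7/2), (9/2), ⟨by norm_num, by norm_num, by norm_num, by norm_num⟩,
        by intro i; fin_cases i <;> norm_num [formsA1A3],
        by intro i; fin_cases i <;> norm_num [formsA1A3]⟩

/-- The hyperplane arrangement
`I(A₁ ⊕ A₃, (𝟑,𝟏) ⊕ (𝟏,𝟏𝟓) ⊕ (𝟐,𝟒) ⊕ (𝟐,𝟒̄) ⊕ (𝟏,𝟔))` has exactly twelve chambers, whose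
sign vectors (in the order `(ϖ₃, ϖ₄, ϖ₅, ϖ₆, ϖ₇, ϖ₈, ϖ₉)`) are the twelve listed vectors. -/
theorem chambers_A1A3 :
    realizedSignVectorsA1A3 =
      {![false, false, false, true, false, false, true],
       ![false, true, false, true, false, false, true],
       ![false, true, true, true, false, false, true],
       ![false, true, true, true, false, false, false],
       ![false, true, true, false, false, false, false],
       ![false, true, false, true, true, false, true],
       ![true, true, false, true, true, false, true],
       ![true, true, true, false, false, false, false],
       ![true, true, true, false, false, false, true],
       ![true, true, true, true, false, false, true],
       ![true, true, true, true, true, false, true],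
       ![true, true, true, true, true, true, true]} ∧
    realizedSignVectorsA1A3.ncard = 12 := by
  refine ⟨key_eq, ?_⟩
  rw [key_eq]
  rw [show ({![false, false, false, true, false, false, true], ![false, true, false, true, false, false, true], ![false, true, true, true, false, false, true], ![false, true, true, true, false, false, false], ![false, true, true, false, false, false, false], ![false, true, false, true, true, false, true], ![true, true, false, true, true, false, true], ![true, true, true, false, false, false, false], ![true, true, true, false, false, false, true], ![true, true, true, true, false, false, true], ![true, true, true, true, true, false, true], ![true, true, true, true, true, true, true]} : Set (Fin 7 → Bool)) =
      (↑({![false, false, false, true, false, false, true], ![false, true, false, true, false, false, true], ![false, true, true, true, false, false, true], ![false, true, true, true, false, false, false], ![false, true, true, false, false, false, false], ![false, true, false, true, true, false, true], ![true, true, false, true, true, false, true], ![true, true, true, false, false, false, false], ![true, true, true, false, false, false, true], ![true, true, true, true, false, false, true], ![true, true, true, true, true, false, true], ![true, true, true, true, true, true, true]} : Finset (Fin 7 → Bool)) : Set (Fin 7 → Bool)) by simp]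
  rw [Set.ncard_coe_finset]
  decide
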